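/- arXiv:1310.2934 — 2 statements merged into one kernel-verified Lean document; each statement's English description precedes it below -/
import Mathlib

section
/- Let G be a graph on n vertices and k ≥ 3, ℓ ≥ 1 integers, and suppose every set of k vertices of G has at least ⌈2k·log_a n⌉ common neighbors, where a = k^k/(k^k−k!). If n is sufficiently large (depending on k and ℓ), then there exists an edge-coloring of G with k colors such that for every k-set S of vertices there exist ℓ internally disjoint rainbow S-trees; i.e., rx_{k,ℓ}(G) ≤ k. -/
/-- `rxLE G k ℓ t` : the (k,ℓ)-rainbow index of `G` is at most `t`, i.e. there is an
edge-coloring with `t` colors such that every `k`-set `S` of vertices is connected by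
`ℓ` internally disjoint rainbow `S`-trees. -/
def rxLE {V : Type*} (G : SimpleGraph V) (k ℓ t : ℕ) : Prop :=
  ∃ c : Sym2 V → Fin t, ∀ S : Finset V, S.card = k →
    ∃ T : Fin ℓ → G.Subgraph,
      (∀ i, (T i).coe.IsTree ∧ (S : Set V) ⊆ (T i).verts ∧ Set.InjOn c (T i).edgeSet) ∧
      ∀ i j, i ≠ j → (T i).edgeSet ∩ (T j).edgeSet = ∅ ∧ (T i).verts ∩ (T j).verts = (S : Set V)

namespace RainbowAux
open Finset Filter



lemma factorial_lt_pow (k : ℕ) (hk : 3 ≤ k) : Nat.factorial k < k ^ k := by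
  have h1 : Nat.factorial (k-1) ≤ (k-1)^(k-1) := Nat.factorial_le_pow _
  have h2 : (k-1)^(k-1) < k^(k-1) := Nat.pow_lt_pow_left (by omega) (by omega)
  have h3 := lt_of_le_of_lt h1 h2
  have h4 : Nat.factorial k = k * Nat.factorial (k-1) := by
    obtain ⟨j, rfl⟩ : ∃ j, k = j + 1 := ⟨k - 1, by omega⟩
    simp [Nat.factorial_succ]
  have h5 : k * Nat.factorial (k-1) < k * k^(k-1) :=
    Nat.mul_lt_mul_of_le_of_lt (le_refl k) h3 (by omega)
  have h6 : k * k^(k-1) = k^k := by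
    rw [← pow_succ']
    congr 1
    omega
  omega


variable {V : Type*}

lemma isAcyclic_of_adj_imp (H : SimpleGraph V) (u : V)
    (h : ∀ ⦃x y⦄, H.Adj x y → x = u ∨ y = u) : H.IsAcyclic := by
  classical
  suffices key : ∀ q : H.Walk u u, ¬ q.IsCycle by
    intro v p hp
    have hu : u ∈ p.support := by
      cases p with
      | nil => exact absurd hp.three_le_length (by simp)
      | cons hadj q =>
        rcases h hadj with h1 | h1
        · rw [SimpleGraph.Walk.support_cons]; exact h1 ▸ List.mem_cons_self
        · rw [SimpleGraph.Walk.support_cons]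
          exact List.mem_cons_of_mem _ (h1 ▸ q.start_mem_support)
    exact key _ (hp.rotate hu)
  intro q hq
  cases q with
  | nil => exact absurd hq.three_le_length (by simp)
  | cons hadj r =>
    rename_i b
    have hbu : b ≠ u := (H.ne_of_adj hadj).symm
    cases r with
    | nil => exact hbu rfl
    | cons hadj2 r' =>
      rename_i c
      have hcu : c = u := (h hadj2).resolve_left hbu
      subst hcu
      cases r' with
      | nil => exact absurd hq.three_le_length (by simp)
      | cons hadj3 r'' =>
        have hnd := hq.support_nodup
        simp only [SimpleGraph.Walk.support_cons, List.tail_cons, List.nodup_cons] at hnd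
        exact hnd.2.1 r''.end_mem_support

/-- The star subgraph with center `u` and leaf set `S`. -/
def starSub (G : SimpleGraph V) (u : V) (S : Set V) (h : ∀ s ∈ S, G.Adj u s) : G.Subgraph where
  verts := insert u S
  Adj v w := (v = u ∧ w ∈ S) ∨ (w = u ∧ v ∈ S)
  adj_sub := by rintro v w (⟨rfl, hw⟩ | ⟨rfl, hv⟩)
                · exact h _ hw
                · exact (h _ hv).symm
  edge_vert := by rintro v w (⟨rfl, hw⟩ | ⟨rfl, hv⟩)
                  · exact Set.mem_insert _ _
                  · exact Set.mem_insert_of_mem _ hv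
  symm := by constructor; rintro v w (⟨rfl, hw⟩ | ⟨rfl, hv⟩)
             · exact Or.inr ⟨rfl, hw⟩
             · exact Or.inl ⟨rfl, hv⟩

lemma starSub_verts (G : SimpleGraph V) (u : V) (S : Set V) (h : ∀ s ∈ S, G.Adj u s) :
    (starSub G u S h).verts = insert u S := rfl

lemma starSub_edgeSet (G : SimpleGraph V) (u : V) (S : Set V) (h : ∀ s ∈ S, G.Adj u s) :
    (starSub G u S h).edgeSet = (fun s => s(u, s)) '' S := by
  ext e
  induction e with
  | _ v w =>
    simp only [SimpleGraph.Subgraph.mem_edgeSet, starSub, Set.mem_image]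
    constructor
    · rintro (⟨rfl, hw⟩ | ⟨rfl, hv⟩)
      · exact ⟨w, hw, rfl⟩
      · exact ⟨v, hv, Sym2.eq_swap⟩
    · rintro ⟨s, hs, he⟩
      rw [Sym2.eq_iff] at he
      rcases he with ⟨rfl, rfl⟩ | ⟨rfl, rfl⟩
      · exact Or.inl ⟨rfl, hs⟩
      · exact Or.inr ⟨rfl, hs⟩

lemma starSub_isTree (G : SimpleGraph V) (u : V) (S : Set V) (h : ∀ s ∈ S, G.Adj u s) :
    (starSub G u S h).coe.IsTree := by
  have hu' : u ∈ (starSub G u S h).verts := Set.mem_insert _ _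
  constructor
  · -- connected
    have hne : Nonempty ((starSub G u S h).verts) := ⟨⟨u, hu'⟩⟩
    constructor
    intro x y
    have key : ∀ z : (starSub G u S h).verts, (starSub G u S h).coe.Reachable z ⟨u, hu'⟩ := by
      rintro ⟨z, hz⟩
      rcases hz with rfl | hz
      · rfl
      · refine SimpleGraph.Adj.reachable ?_
        rw [SimpleGraph.Subgraph.coe_adj]
        exact Or.inr ⟨rfl, hz⟩
    exact (key x).trans (key y).symm
  · -- acyclic
    refine isAcyclic_of_adj_imp _ (⟨u, hu'⟩ : (starSub G u S h).verts) ?_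
    rintro ⟨x, hx⟩ ⟨y, hy⟩ hadj
    rw [SimpleGraph.Subgraph.coe_adj] at hadj
    rcases hadj with ⟨hxu, -⟩ | ⟨hyu, -⟩
    · exact Or.inl (Subtype.ext hxu)
    · exact Or.inr (Subtype.ext hyu)


variable {V : Type*} [Fintype V] [DecidableEq V]

/-- the color pattern of the star at `u` with leaves `S` -/
def pat (k : ℕ) (c : Sym2 V → Fin k) (u : V) (S : Finset V) : S → Fin k :=
  fun s => c s(u, (s : V))

/-- the star at `u` over `S` is rainbow -/
def Rb (k : ℕ) (c : Sym2 V → Fin k) (u : V) (S : Finset V) : Prop :=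
  Function.Injective (pat k c u S)

lemma star_edge_injOn (u : V) (S : Finset V) (hu : u ∉ S) :
    Set.InjOn (fun s => s(u, s)) S := by
  intro s hs t ht h
  rw [Sym2.eq_iff] at h
  rcases h with ⟨-, rfl⟩ | ⟨h1, h2⟩
  · rfl
  · exact h2.trans h1

/-- the edges of the star at `u` over `S` -/
def stE (u : V) (S : Finset V) : Finset (Sym2 V) := S.image (fun s => s(u, s))

lemma card_stE (u : V) (S : Finset V) (hu : u ∉ S) : (stE u S).card = S.card :=
  Finset.card_image_of_injOn (star_edge_injOn u S hu)

lemma stE_disjoint (u u' : V) (S : Finset V) (hu : u ∉ S) (hu' : u' ∉ S) (hne : u ≠ u') :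
    Disjoint (stE u S) (stE u' S) := by
  rw [Finset.disjoint_left]
  intro e he he'
  simp only [stE, Finset.mem_image] at he he'
  obtain ⟨s, hs, rfl⟩ := he
  obtain ⟨t, ht, h⟩ := he'
  rw [Sym2.eq_iff] at h
  rcases h with ⟨h1, h2⟩ | ⟨h1, h2⟩
  · exact hne h1.symm
  · exact hu' (h1 ▸ hs)

/-- number of non-rainbow patterns on one star -/
lemma card_bad_patterns (k : ℕ) (S : Finset V) (hS : S.card = k) :
    Fintype.card {f : S → Fin k // ¬ Function.Injective f} = k ^ k - Nat.factorial k := by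
  classical
  have h1 : Fintype.card {f : S → Fin k // Function.Injective f} = Nat.factorial k := by
    rw [Fintype.card_congr (Equiv.subtypeInjectiveEquivEmbedding (↥S) (Fin k)),
      Fintype.card_embedding_eq]
    simp [Fintype.card_coe, hS, Nat.descFactorial_self]
  rw [Fintype.card_subtype_compl, h1, Fintype.card_fun]
  simp [Fintype.card_coe, hS]

/-- colorings constrained to a fixed value on a finite set of coordinates -/
def fixEquiv (k : ℕ) (z : Fin k) (used : Finset (Sym2 V)) :
    {g : Sym2 V → Fin k // ∀ e ∈ used, g e = z} ≃ ({e : Sym2 V // e ∉ used} → Fin k) where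
  toFun g e := g.1 e
  invFun h := ⟨fun e => if he : e ∈ used then z else h ⟨e, he⟩, fun e he => dif_pos he⟩
  left_inv g := by
    ext e
    by_cases he : e ∈ used
    · simp [he, g.2 e he]
    · simp [he]
  right_inv h := by
    ext e
    simp [e.2]

/-- Main counting bound: colorings failing on all stars centered in `A`. -/
lemma card_allFail_le (k : ℕ) (hk : 0 < k) (A S : Finset V) (hS : S.card = k)
    (hAS : ∀ u ∈ A, u ∉ S)
    [DecidablePred (fun c : Sym2 V → Fin k => ∀ u ∈ A, ¬ Rb k c u S)] :
    (Finset.univ.filter (fun c : Sym2 V → Fin k => ∀ u ∈ A, ¬ Rb k c u S)).card ≤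
      (k ^ k - Nat.factorial k) ^ A.card *
        k ^ (Fintype.card (Sym2 V) - k * A.card) := by
  classical
  set used : Finset (Sym2 V) := A.biUnion (fun u => stE u S) with hused
  have hcard_used : used.card = k * A.card := by
    rw [hused, Finset.card_biUnion]
    · rw [Finset.sum_congr rfl (fun u hu => card_stE u S (hAS u hu)), Finset.sum_const, hS,
        smul_eq_mul, mul_comm]
    · intro u hu u' hu' hne
      exact stE_disjoint u u' S (hAS u hu) (hAS u' hu') hne
  set F := Finset.univ.filter (fun c : Sym2 V → Fin k => ∀ u ∈ A, ¬ Rb k c u S) with hF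
  set z : Fin k := ⟨0, hk⟩
  -- the injection
  let Φ : F → (A → {f : S → Fin k // ¬ Function.Injective f}) ×
      {g : Sym2 V → Fin k // ∀ e ∈ used, g e = z} := fun c =>
    ⟨fun u => ⟨pat k c.1 u.1 S, by
        have := (Finset.mem_filter.mp c.2).2
        exact this u.1 u.2⟩,
     ⟨fun e => if e ∈ used then z else c.1 e, fun e he => if_pos he⟩⟩
  have hΦ : Function.Injective Φ := by
    intro c c' h
    have h1 := congrArg Prod.fst h
    have h2 := congrArg Prod.snd h
    apply Subtype.ext
    funext e
    by_cases he : e ∈ used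
    · simp only [hused, Finset.mem_biUnion, stE, Finset.mem_image] at he
      obtain ⟨u, hu, s, hs, rfl⟩ := he
      have := congrFun h1 ⟨u, hu⟩
      have := congrArg Subtype.val this
      have := congrFun this ⟨s, hs⟩
      exact this
    · have := congrArg Subtype.val h2
      have := congrFun this e
      simpa [Φ, if_neg he] using this
  calc F.card = Fintype.card F := (Fintype.card_coe F).symm
    _ ≤ Fintype.card ((A → {f : S → Fin k // ¬ Function.Injective f}) ×
        {g : Sym2 V → Fin k // ∀ e ∈ used, g e = z}) := Fintype.card_le_of_injective Φ hΦ
    _ = (k ^ k - Nat.factorial k) ^ A.card * k ^ (Fintype.card (Sym2 V) - k * A.card) := by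
        rw [Fintype.card_prod, Fintype.card_fun, card_bad_patterns k S hS,
          Fintype.card_congr (fixEquiv k z used), Fintype.card_fun]
        congr 1
        · rw [Fintype.card_coe]
        · congr 1
          · simp
          · rw [Fintype.card_subtype_compl, ← hcard_used]
            congr 1
            rw [Fintype.card_coe]


lemma eventually_log_pow_le (C a0 b : ℝ) (hb : 0 ≤ b) (L k : ℕ) (hk : 1 ≤ k) :
    ∀ᶠ x : ℝ in atTop, (C * Real.log x + a0) ^ L * b ≤ x ^ k := by
  rcases Nat.eq_zero_or_pos L with rfl | hL
  · simp only [pow_zero, one_mul]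
    have h1 : Tendsto (fun x : ℝ => x ^ k) atTop atTop :=
      tendsto_pow_atTop (by omega)
    exact h1.eventually_ge_atTop b
  · set r : ℝ := (k : ℝ) / (2 * L) with hr
    have hrpos : 0 < r := by positivity
    have hnorm : ∀ᶠ x : ℝ in atTop, ‖(fun x => x ^ r) x‖ = x ^ r := by
      filter_upwards [eventually_ge_atTop (0:ℝ)] with x hx
      exact Real.norm_of_nonneg (Real.rpow_nonneg hx r)
    have htend : Tendsto (fun x : ℝ => x ^ r) atTop atTop := tendsto_rpow_atTop hrpos
    have h1 : (fun x : ℝ => C * Real.log x + a0) =o[atTop] (fun x : ℝ => x ^ r) := by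
      refine Asymptotics.IsLittleO.add ?_ ?_
      · exact (isLittleO_log_rpow_atTop hrpos).const_mul_left C
      · rw [Asymptotics.isLittleO_const_left]
        right
        refine Tendsto.congr' (hnorm.mono fun x hx => hx.symm) htend
    have h2 : ∀ᶠ x : ℝ in atTop, |C * Real.log x + a0| ≤ x ^ r := by
      have := h1.bound one_pos
      filter_upwards [this, eventually_ge_atTop (0:ℝ)] with x hx hx0
      rw [Real.norm_eq_abs, one_mul, Real.norm_eq_abs,
        abs_of_nonneg (Real.rpow_nonneg hx0 r)] at hx
      exact hx
    have h3 : ∀ᶠ x : ℝ in atTop, b ≤ x ^ ((k:ℝ)/2) :=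
      (tendsto_rpow_atTop (by positivity)).eventually_ge_atTop b
    filter_upwards [h2, h3, eventually_gt_atTop (0:ℝ)] with x hx2 hx3 hx0
    have hxr : (x ^ r) ^ L = x ^ ((k:ℝ)/2) := by
      rw [← Real.rpow_natCast (x ^ r) L, ← Real.rpow_mul hx0.le]
      congr 1
      have hL0 : (L:ℝ) ≠ 0 := by positivity
      rw [hr]
      field_simp
    calc (C * Real.log x + a0) ^ L * b
        ≤ |C * Real.log x + a0| ^ L * b := by
          apply mul_le_mul_of_nonneg_right _ hb
          rw [← abs_pow]
          exact le_abs_self _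
      _ ≤ (x ^ r) ^ L * b := by
          apply mul_le_mul_of_nonneg_right _ hb
          exact pow_le_pow_left₀ (abs_nonneg _) hx2 L
      _ = x ^ ((k:ℝ)/2) * b := by rw [hxr]
      _ ≤ x ^ ((k:ℝ)/2) * x ^ ((k:ℝ)/2) := by
          apply mul_le_mul_of_nonneg_left hx3 (Real.rpow_nonneg hx0.le _)
      _ = x ^ k := by
          rw [← Real.rpow_add hx0, ← Real.rpow_natCast x k]
          norm_num

end RainbowAux

open RainbowAux Finset Filter in
/-- If every `k`-set of vertices of a graph `G` on `n` vertices has at least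
`⌈2k·log_a n⌉` common neighbors, where `a = k^k/(k^k-k!)`, then for `n`
sufficiently large (depending on `k` and `ℓ`), `rx_{k,ℓ}(G) ≤ k`. -/
theorem rainbow_index_le_of_many_common_neighbors (k ℓ : ℕ) (hk : 3 ≤ k) (hℓ : 1 ≤ ℓ) :
    ∃ N : ℕ, ∀ n : ℕ, N ≤ n → ∀ G : SimpleGraph (Fin n),
      (∀ S : Finset (Fin n), S.card = k →
        ⌈2 * k * Real.logb ((k : ℝ) ^ k / ((k : ℝ) ^ k - Nat.factorial k)) n⌉₊ ≤
          {v : Fin n | ∀ u ∈ S, G.Adj v u}.ncard) →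
      rxLE G k ℓ k := by
  classical
  set a : ℝ := (k : ℝ) ^ k / ((k : ℝ) ^ k - Nat.factorial k) with ha
  have hfact : Nat.factorial k < k ^ k := factorial_lt_pow k hk
  have hfactR : (Nat.factorial k : ℝ) < (k:ℝ)^k := by exact_mod_cast hfact
  have hden : (0:ℝ) < (k:ℝ)^k - Nat.factorial k := by linarith
  have ha1 : 1 < a := by
    rw [ha, lt_div_iff₀ hden]
    have : (0:ℝ) < (Nat.factorial k : ℝ) := by positivity
    linarith
  have ha0 : (0:ℝ) < a := lt_trans zero_lt_one ha1
  have hloga : 0 < Real.log a := Real.log_pos ha1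
  set L : ℕ := ℓ - 1 with hL
  set C : ℝ := 2 * k / Real.log a with hC
  have hCpos : 0 < C := by positivity
  -- eventual facts over ℝ
  have E1 : ∀ᶠ x : ℝ in atTop, (C * Real.log x + 1) ^ L * (2 * a ^ L) ≤ x ^ k :=
    eventually_log_pow_le C 1 (2 * a ^ L) (by positivity) L k (by omega)
  have E2 : ∀ᶠ x : ℝ in atTop, (C * Real.log x + 1) * k ≤ x ^ 1 := by
    have := eventually_log_pow_le C 1 (k : ℝ) (by positivity) 1 1 (le_refl 1)
    filter_upwards [this] with x hx
    simpa using hx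
  have E3 : ∀ᶠ x : ℝ in atTop, (ℓ:ℝ) ≤ C * Real.log x := by
    have ht : Tendsto (fun x : ℝ => C * Real.log x) atTop atTop :=
      (Real.tendsto_log_atTop).const_mul_atTop hCpos
    exact ht.eventually_ge_atTop _
  have EN : ∀ᶠ n : ℕ in atTop,
      ((C * Real.log n + 1) ^ L * (2 * a ^ L) ≤ (n:ℝ) ^ k ∧
       (C * Real.log n + 1) * k ≤ (n:ℝ) ^ 1 ∧
       (ℓ:ℝ) ≤ C * Real.log n) ∧ 1 ≤ (n:ℝ) :=
    (tendsto_natCast_atTop_atTop (R := ℝ)).eventually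
      (((E1.and (E2.and E3))).and (eventually_ge_atTop 1))
  obtain ⟨N, hN⟩ := Filter.eventually_atTop.mp EN
  refine ⟨N, fun n hn G hG => ?_⟩
  obtain ⟨⟨h1, h2, h3⟩, hn1R⟩ := hN n hn
  have hn1 : 1 ≤ n := by exact_mod_cast hn1R
  set lg : ℝ := 2 * (k:ℝ) * Real.logb a n with hlg
  have hlg_eq : lg = C * Real.log n := by
    rw [hlg, hC, Real.logb]
    ring
  set m : ℕ := ⌈lg⌉₊ with hm
  have hlg0 : 0 ≤ lg := by
    rw [hlg_eq]
    have : 0 ≤ Real.log n := Real.log_nonneg hn1R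
    positivity
  have hmlg : (m:ℝ) < lg + 1 := Nat.ceil_lt_add_one hlg0
  have hℓm : ℓ ≤ m := by
    have hx : (ℓ:ℝ) ≤ (m:ℝ) := by
      have hx1 : (ℓ:ℝ) ≤ lg := by rw [hlg_eq]; exact h3
      exact hx1.trans (Nat.le_ceil lg)
    exact_mod_cast hx
  set q : ℕ := m - L with hq
  have hqL : q + L = m := Nat.sub_add_cancel (by omega)
  have hq1 : 1 ≤ q := by omega
  have hkm : k * m ≤ n := by
    have hx : ((k * m : ℕ):ℝ) ≤ (n:ℝ) := by
      push_cast
      calc (k:ℝ) * m ≤ (k:ℝ) * (lg + 1) :=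
            mul_le_mul_of_nonneg_left hmlg.le (by positivity)
        _ = (C * Real.log n + 1) * k := by rw [hlg_eq]; ring
        _ ≤ (n:ℝ)^1 := h2
        _ = (n:ℝ) := pow_one _
    exact_mod_cast hx
  -- choose, for each S, a set of m common neighbors
  have hUex : ∀ S : Finset (Fin n), S.card = k →
      ∃ U : Finset (Fin n), U.card = m ∧ ∀ u ∈ U, ∀ s ∈ S, G.Adj u s := by
    intro S hS
    have h := hG S hS
    have hcard : m ≤ {v : Fin n | ∀ u ∈ S, G.Adj v u}.toFinset.card := by
      rw [← Set.ncard_eq_toFinset_card']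
      exact h
    obtain ⟨U, hUsub, hUcard⟩ := Finset.exists_subset_card_eq hcard
    refine ⟨U, hUcard, fun u hu s hs => ?_⟩
    have hmem := hUsub hu
    rw [Set.mem_toFinset] at hmem
    exact hmem s hs
  set Ufun : Finset (Fin n) → Finset (Fin n) :=
    fun S => if hS : S.card = k then (hUex S hS).choose else ∅ with hUfun
  have hUcard : ∀ S, S.card = k → (Ufun S).card = m := by
    intro S hS
    rw [hUfun]
    simp only [dif_pos hS]
    exact (hUex S hS).choose_spec.1
  have hUadj : ∀ S, S.card = k → ∀ u ∈ Ufun S, ∀ s ∈ S, G.Adj u s := by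
    intro S hS
    rw [hUfun]
    simp only [dif_pos hS]
    exact (hUex S hS).choose_spec.2
  have hUnotmem : ∀ S, S.card = k → ∀ u ∈ Ufun S, u ∉ S :=
    fun S hS u hu hmem => G.irrefl (hUadj S hS u hu u hmem)
  set E := Fintype.card (Sym2 (Fin n)) with hE
  have hEval : E = n * (n+1) / 2 := by
    rw [hE, Sym2.card]
    simp [Nat.choose_two_right]
    ring_nf
  have hkqE : k * q ≤ E := by
    have hqm : q ≤ m := by omega
    have hx1 : k * q ≤ k * m := Nat.mul_le_mul_left k hqm
    have hx2 : 2 * n ≤ n * (n+1) := by nlinarith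
    have hx3 : n ≤ n * (n+1) / 2 := by
      calc n = 2 * n / 2 := by omega
        _ ≤ n * (n+1) / 2 := Nat.div_le_div_right hx2
    omega
  -- the set of bad colorings
  set Bad : Finset (Sym2 (Fin n) → Fin k) := Finset.univ.filter
    (fun c => ∃ S ∈ (Finset.univ : Finset (Fin n)).powersetCard k,
      ((Ufun S).filter (fun u => Rb k c u S)).card < ℓ) with hBadDef
  have hBadsub : Bad ⊆ ((Finset.univ : Finset (Fin n)).powersetCard k).biUnion (fun S =>
      ((Ufun S).powersetCard q).biUnion (fun A =>
        Finset.univ.filter (fun c : Sym2 (Fin n) → Fin k => ∀ u ∈ A, ¬ Rb k c u S))) := by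
    intro c hc
    rw [hBadDef, Finset.mem_filter] at hc
    obtain ⟨-, S, hSmem, hcount⟩ := hc
    have hSk : S.card = k := (Finset.mem_powersetCard.mp hSmem).2
    rw [Finset.mem_biUnion]
    refine ⟨S, hSmem, ?_⟩
    have hsplit := Finset.card_filter_add_card_filter_not
      (s := Ufun S) (p := fun u => Rb k c u S)
    have hcardU := hUcard S hSk
    have hbig : q ≤ ((Ufun S).filter (fun u => ¬ Rb k c u S)).card := by omega
    obtain ⟨A, hAsub, hAcard⟩ := Finset.exists_subset_card_eq hbig
    rw [Finset.mem_biUnion]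
    refine ⟨A, Finset.mem_powersetCard.mpr
      ⟨hAsub.trans (Finset.filter_subset _ _), hAcard⟩, ?_⟩
    rw [Finset.mem_filter]
    exact ⟨Finset.mem_univ _, fun u hu => (Finset.mem_filter.mp (hAsub hu)).2⟩
  have hBadCard : Bad.card ≤
      n.choose k * (m.choose q * ((k^k - Nat.factorial k)^q * k ^ (E - k*q))) := by
    refine (Finset.card_le_card hBadsub).trans ?_
    refine (Finset.card_biUnion_le).trans ?_
    have hstep : ∀ S ∈ (Finset.univ : Finset (Fin n)).powersetCard k,
        (((Ufun S).powersetCard q).biUnion fun A =>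
          Finset.univ.filter (fun c : Sym2 (Fin n) → Fin k => ∀ u ∈ A, ¬ Rb k c u S)).card
        ≤ m.choose q * ((k^k - Nat.factorial k)^q * k ^ (E - k*q)) := by
      intro S hS
      have hSk : S.card = k := (Finset.mem_powersetCard.mp hS).2
      refine Finset.card_biUnion_le.trans ?_
      have hA : ∀ A ∈ (Ufun S).powersetCard q,
          (Finset.univ.filter (fun c : Sym2 (Fin n) → Fin k => ∀ u ∈ A, ¬ Rb k c u S)).card
            ≤ (k^k - Nat.factorial k)^q * k ^ (E - k*q) := by
        intro A hAmem
        obtain ⟨hAsub, hAcard⟩ := Finset.mem_powersetCard.mp hAmem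
        have := card_allFail_le k (by omega) A S hSk
          (fun u hu => hUnotmem S hSk u (hAsub hu))
        rwa [hAcard, ← hE] at this
      refine (Finset.sum_le_sum hA).trans ?_
      rw [Finset.sum_const, Finset.card_powersetCard, hUcard S hSk, smul_eq_mul]
    refine (Finset.sum_le_sum hstep).trans ?_
    rw [Finset.sum_const, Finset.card_powersetCard, Finset.card_univ, Fintype.card_fin,
      smul_eq_mul]
  -- the key numerical estimate
  have hcast : ((k^k - Nat.factorial k : ℕ) : ℝ) = (k:ℝ)^k - Nat.factorial k := by
    rw [Nat.cast_sub hfact.le]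
    push_cast
    ring
  have hnum : n.choose k * (m.choose q * (k^k - Nat.factorial k)^q) < k^(k*q) := by
    have hn0 : (0:ℝ) < (n:ℝ) := by exact_mod_cast Nat.lt_of_lt_of_le Nat.zero_lt_one hn1
    have hnpos : (0:ℝ) < (n:ℝ)^k := by positivity
    have b1 : ((n.choose k : ℕ) : ℝ) ≤ (n:ℝ)^k := by exact_mod_cast Nat.choose_le_pow n k
    have b2 : ((m.choose q : ℕ) : ℝ) ≤ (m:ℝ)^L := by
      have hcs : m.choose q = m.choose L := by
        rw [hq]
        exact Nat.choose_symm (by omega)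
      rw [hcs]
      exact_mod_cast Nat.choose_le_pow m L
    have haK : a * ((k:ℝ)^k - Nat.factorial k) = (k:ℝ)^k := by
      rw [ha]
      field_simp
    have hRHS : ((k:ℝ)^k)^q = a^q * ((k:ℝ)^k - Nat.factorial k)^q := by
      rw [← mul_pow, haK]
    have hmn : (m:ℝ)^L * a^L < (n:ℝ)^k := by
      have hb : (m:ℝ)^L ≤ (lg + 1)^L := pow_le_pow_left₀ (by positivity) hmlg.le L
      have h1' : (lg + 1) ^ L * (2 * a ^ L) ≤ (n:ℝ) ^ k := by rw [hlg_eq]; exact h1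
      have hpos : (0:ℝ) < (lg+1)^L * a^L := by positivity
      calc (m:ℝ)^L * a^L ≤ (lg+1)^L * a^L :=
            mul_le_mul_of_nonneg_right hb (by positivity)
        _ < (lg+1)^L * (2*a^L) := by nlinarith
        _ ≤ (n:ℝ)^k := h1'
    have ham : (n:ℝ)^k * (n:ℝ)^k ≤ a^m := by
      have e1 : a ^ lg = (n:ℝ) ^ ((2*k : ℕ):ℝ) := by
        rw [hlg, show (2*(k:ℝ)) * Real.logb a n = Real.logb a n * ((2*k : ℕ):ℝ) by
          push_cast; ring]
        rw [Real.rpow_mul ha0.le, Real.rpow_logb ha0 (ne_of_gt ha1) hn0]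
      have e2 : a ^ lg ≤ a ^ (m:ℝ) :=
        (Real.rpow_le_rpow_left_iff ha1).mpr (Nat.le_ceil lg)
      calc (n:ℝ)^k * (n:ℝ)^k = (n:ℝ)^(2*k) := by rw [← pow_add]; ring_nf
        _ = a ^ lg := by rw [e1, Real.rpow_natCast]
        _ ≤ a ^ (m:ℝ) := e2
        _ = a ^ m := Real.rpow_natCast a m
    have hqa : a^q * a^L = a^m := by rw [← pow_add, hqL]
    have hfinal : (n:ℝ)^k * (m:ℝ)^L < a^q := by
      have hL0 : (0:ℝ) < a^L := by positivity
      have step : ((n:ℝ)^k * (m:ℝ)^L) * a^L < (a^q) * a^L := by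
        calc ((n:ℝ)^k * (m:ℝ)^L) * a^L = (n:ℝ)^k * ((m:ℝ)^L * a^L) := by ring
          _ < (n:ℝ)^k * (n:ℝ)^k := by exact mul_lt_mul_of_pos_left hmn hnpos
          _ ≤ a^m := ham
          _ = a^q * a^L := hqa.symm
      exact lt_of_mul_lt_mul_right step hL0.le
    have key : ((n.choose k : ℕ):ℝ) * (((m.choose q : ℕ):ℝ) * ((k:ℝ)^k - Nat.factorial k)^q)
        < ((k:ℝ)^k)^q := by
      calc ((n.choose k : ℕ):ℝ) * (((m.choose q : ℕ):ℝ) * ((k:ℝ)^k - Nat.factorial k)^q)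
          ≤ (n:ℝ)^k * ((m:ℝ)^L * ((k:ℝ)^k - Nat.factorial k)^q) := by
            apply mul_le_mul b1 (mul_le_mul_of_nonneg_right b2 (by positivity))
              (by positivity) (by positivity)
        _ < a^q * ((k:ℝ)^k - Nat.factorial k)^q := by
            rw [← mul_assoc]
            exact mul_lt_mul_of_pos_right hfinal (by positivity)
        _ = ((k:ℝ)^k)^q := hRHS.symm
    have hfin : ((n.choose k * (m.choose q * (k^k - Nat.factorial k)^q) : ℕ) : ℝ)
        < ((k^(k*q) : ℕ):ℝ) := by
      push_cast [hcast]
      rw [pow_mul]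
      exact_mod_cast key
    exact_mod_cast hfin
  have hBadlt : Bad.card < Fintype.card (Sym2 (Fin n) → Fin k) := by
    rw [Fintype.card_fun, Fintype.card_fin, ← hE]
    calc Bad.card ≤ n.choose k * (m.choose q * ((k^k - Nat.factorial k)^q * k ^ (E - k*q))) :=
          hBadCard
      _ = (n.choose k * (m.choose q * (k^k - Nat.factorial k)^q)) * k ^ (E - k*q) := by ring
      _ < k^(k*q) * k ^ (E - k*q) := by
          have hkpos : 0 < k ^ (E - k*q) := pow_pos (by omega) _
          exact Nat.mul_lt_mul_of_lt_of_le hnum (le_refl _) hkpos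
      _ = k^E := by rw [← pow_add, Nat.add_sub_cancel' hkqE]
  obtain ⟨c, hc⟩ : ∃ c : Sym2 (Fin n) → Fin k, c ∉ Bad := by
    by_contra hcon
    push_neg at hcon
    have hsub : (Finset.univ : Finset (Sym2 (Fin n) → Fin k)) ⊆ Bad := fun c _ => hcon c
    have := Finset.card_le_card hsub
    rw [Finset.card_univ] at this
    omega
  have hgood : ∀ S : Finset (Fin n), S.card = k →
      ℓ ≤ ((Ufun S).filter (fun u => Rb k c u S)).card := by
    intro S hS
    by_contra hcon
    push_neg at hcon
    apply hc
    rw [hBadDef, Finset.mem_filter]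
    exact ⟨Finset.mem_univ _, S,
      Finset.mem_powersetCard.mpr ⟨Finset.subset_univ _, hS⟩, hcon⟩
  -- construct the trees
  refine ⟨c, fun S hS => ?_⟩
  obtain ⟨T', hT'sub, hT'card⟩ := Finset.exists_subset_card_eq (hgood S hS)
  set ι := T'.orderIsoOfFin hT'card with hι
  set ctr : Fin ℓ → Fin n := fun i => ((ι i : T') : Fin n) with hctr
  have hctr_inj : Function.Injective ctr := by
    intro i j hij
    exact ι.injective (Subtype.ext hij)
  have hctr_mem : ∀ i, ctr i ∈ (Ufun S).filter (fun u => Rb k c u S) :=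
    fun i => hT'sub (ι i).2
  have hadj : ∀ i, ∀ s ∈ (S : Set (Fin n)), G.Adj (ctr i) s := by
    intro i s hs
    exact hUadj S hS _ (Finset.mem_filter.mp (hctr_mem i)).1 s hs
  have hrb : ∀ i, Rb k c (ctr i) S := fun i => (Finset.mem_filter.mp (hctr_mem i)).2
  have hnotmem : ∀ i, ctr i ∉ S := fun i => hUnotmem S hS _ (Finset.mem_filter.mp (hctr_mem i)).1
  refine ⟨fun i => starSub G (ctr i) (S : Set (Fin n)) (hadj i), fun i => ?_, fun i j hij => ?_⟩
  · refine ⟨starSub_isTree G _ _ _, ?_, ?_⟩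
    · rw [starSub_verts]
      exact Set.subset_insert _ _
    · rw [starSub_edgeSet]
      rintro e1 ⟨s1, hs1, rfl⟩ e2 ⟨s2, hs2, rfl⟩ hce
      have hps : pat k c (ctr i) S ⟨s1, hs1⟩ = pat k c (ctr i) S ⟨s2, hs2⟩ := hce
      have := hrb i hps
      rw [Subtype.mk_eq_mk] at this
      rw [this]
  · constructor
    · rw [starSub_edgeSet, starSub_edgeSet]
      ext e
      simp only [Set.mem_inter_iff, Set.mem_image, Set.mem_empty_iff_false, iff_false, not_and]
      rintro ⟨s1, hs1, rfl⟩ ⟨s2, hs2, he⟩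
      rw [Sym2.eq_iff] at he
      rcases he with ⟨h1, h2⟩ | ⟨h1, h2⟩
      · exact hij (hctr_inj h1).symm
      · apply hnotmem j
        rw [h1]
        exact Finset.mem_coe.mp hs1
    · rw [starSub_verts, starSub_verts]
      ext v
      simp only [Set.mem_inter_iff, Set.mem_insert_iff]
      constructor
      · rintro ⟨h1 | h1, h2 | h2⟩
        · exact absurd (h1.symm.trans h2) (fun hcc => hij (hctr_inj hcc))
        · exact h2
        · exact h1
        · exact h1
      · intro hv
        exact ⟨Or.inr hv, Or.inr hv⟩
end

section
/- Fix k ≥ 3 and c₁ > 3, and let p = c₁·(log_a n / n)^{1/k} with a = k^k/(k^k−k!). In the random graph G(n,p), the probability that some set of k vertices has fewer than 2k·log_a n common neighbors tends to 0 as n → ∞. -/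
open MeasureTheory Filter
open scoped ENNReal

/-- The Erdős–Rényi measure `G(n,p)`: a product of Bernoulli(p) measures indexed by
unordered pairs of vertices. -/
noncomputable def gnp (n : ℕ) (p : ℝ) : Measure (Sym2 (Fin n) → Bool) :=
  Measure.pi fun _ => (ENNReal.ofReal p) • Measure.dirac true
    + (ENNReal.ofReal (1 - p)) • Measure.dirac false

/-- The graph on `Fin n` determined by a sample `f`. -/
def gOf {n : ℕ} (f : Sym2 (Fin n) → Bool) : SimpleGraph (Fin n) :=
  SimpleGraph.fromEdgeSet {e | f e = true}

/-- Functions of disjoint coordinate blocks of a product of probability measures on `Bool`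
multiply under `lintegral`. -/
lemma lintegral_pi_mul_of_disjoint {ι : Type*} [Fintype ι] (ν : ι → Measure Bool)
    [∀ i, IsProbabilityMeasure (ν i)] (B : Set ι) (g h : (ι → Bool) → ℝ≥0∞)
    (hg : ∀ f f' : ι → Bool, (∀ i ∈ B, f i = f' i) → g f = g f')
    (hh : ∀ f f' : ι → Bool, (∀ i ∉ B, f i = f' i) → h f = h f') :
    ∫⁻ f, g f * h f ∂(Measure.pi ν) =
      (∫⁻ f, g f ∂(Measure.pi ν)) * ∫⁻ f, h f ∂(Measure.pi ν) := by
  classical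
  set e := MeasurableEquiv.piEquivPiSubtypeProd (fun _ : ι => Bool) (· ∈ B) with he
  have hmp := measurePreserving_piEquivPiSubtypeProd (α := fun _ : ι => Bool) ν (· ∈ B)
  have hmps := hmp.symm e
  -- notation for the two component measures
  set μ₁ := Measure.pi fun i : {i // i ∈ B} => ν i
  set μ₂ := Measure.pi fun i : {i // i ∉ B} => ν i
  have key : ∀ F : (ι → Bool) → ℝ≥0∞,
      ∫⁻ f, F f ∂(Measure.pi ν) = ∫⁻ z, F (e.symm z) ∂(μ₁.prod μ₂) := by
    intro F
    exact (hmps.lintegral_comp (measurable_of_countable F)).symm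
  have hsymm : ∀ (x : ∀ i : {i // i ∈ B}, Bool) (y : ∀ i : {i // i ∉ B}, Bool) (i : ι),
      e.symm (x, y) i = if h : i ∈ B then x ⟨i, h⟩ else y ⟨i, h⟩ := by
    intro x y i
    rfl
  set G : (∀ i : {i // i ∈ B}, Bool) → ℝ≥0∞ := fun x => g (e.symm (x, fun _ => true))
  set H : (∀ i : {i // i ∉ B}, Bool) → ℝ≥0∞ := fun y => h (e.symm (fun _ => true, y))
  have hGg : ∀ x y, g (e.symm (x, y)) = G x := by
    intro x y
    refine hg _ _ fun i hi => ?_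
    rw [hsymm, hsymm, dif_pos hi, dif_pos hi]
  have hHh : ∀ x y, h (e.symm (x, y)) = H y := by
    intro x y
    refine hh _ _ fun i hi => ?_
    rw [hsymm, hsymm, dif_neg hi, dif_neg hi]
  have hmul : ∫⁻ f, g f * h f ∂(Measure.pi ν) = (∫⁻ x, G x ∂μ₁) * ∫⁻ y, H y ∂μ₂ := by
    rw [key]
    have : ∀ z : (∀ i : {i // i ∈ B}, Bool) × (∀ i : {i // i ∉ B}, Bool),
        g (e.symm z) * h (e.symm z) = G z.1 * H z.2 := by
      rintro ⟨x, y⟩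
      rw [hGg, hHh]
    simp only [this]
    exact lintegral_prod_mul (measurable_of_countable G).aemeasurable
      (measurable_of_countable H).aemeasurable
  have hG : ∫⁻ f, g f ∂(Measure.pi ν) = ∫⁻ x, G x ∂μ₁ := by
    rw [key]
    have : ∀ z : (∀ i : {i // i ∈ B}, Bool) × (∀ i : {i // i ∉ B}, Bool),
        g (e.symm z) = G z.1 * (1 : ℝ≥0∞) := by
      rintro ⟨x, y⟩; rw [mul_one, hGg]
    simp only [this]
    rw [lintegral_prod_mul (measurable_of_countable G).aemeasurable
      (measurable_of_countable (fun _ => (1:ℝ≥0∞))).aemeasurable]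
    simp
  have hH : ∫⁻ f, h f ∂(Measure.pi ν) = ∫⁻ y, H y ∂μ₂ := by
    rw [key]
    have : ∀ z : (∀ i : {i // i ∈ B}, Bool) × (∀ i : {i // i ∉ B}, Bool),
        h (e.symm z) = (1 : ℝ≥0∞) * H z.2 := by
      rintro ⟨x, y⟩; rw [one_mul, hHh]
    simp only [this]
    rw [lintegral_prod_mul (measurable_of_countable (fun _ => (1:ℝ≥0∞))).aemeasurable
      (measurable_of_countable H).aemeasurable]
    simp
  rw [hmul, hG, hH]

/-- Product of functions of pairwise disjoint coordinate blocks: `lintegral` multiplies. -/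
lemma lintegral_pi_prod_blocks {ι V : Type*} [Fintype ι] (ν : ι → Measure Bool)
    [∀ i, IsProbabilityMeasure (ν i)] (F : Finset V) (E : V → Finset ι)
    (g : V → (ι → Bool) → ℝ≥0∞)
    (hdis : ∀ v ∈ F, ∀ w ∈ F, v ≠ w → Disjoint (E v) (E w))
    (hg : ∀ v ∈ F, ∀ f f' : ι → Bool, (∀ i ∈ E v, f i = f' i) → g v f = g v f') :
    ∫⁻ f, ∏ v ∈ F, g v f ∂(Measure.pi ν) = ∏ v ∈ F, ∫⁻ f, g v f ∂(Measure.pi ν) := by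
  classical
  induction F using Finset.induction with
  | empty => simp
  | insert v₀ F hvF ih =>
    have step : ∫⁻ f, g v₀ f * ∏ v ∈ F, g v f ∂(Measure.pi ν) =
        (∫⁻ f, g v₀ f ∂(Measure.pi ν)) * ∫⁻ f, ∏ v ∈ F, g v f ∂(Measure.pi ν) := by
      refine lintegral_pi_mul_of_disjoint ν (↑(E v₀)) _ _ ?_ ?_
      · exact fun f f' hff => hg v₀ (Finset.mem_insert_self _ _) f f' (fun i hi => hff i hi)
      · intro f f' hff
        refine Finset.prod_congr rfl fun v hv => ?_
        refine hg v (Finset.mem_insert_of_mem hv) f f' fun i hi => ?_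
        refine hff i fun hiB => ?_
        have hvv : v₀ ≠ v := fun hh => hvF (hh ▸ hv)
        exact (Finset.disjoint_left.1 (hdis v₀ (Finset.mem_insert_self _ _) v
          (Finset.mem_insert_of_mem hv) hvv)) hiB hi
    rw [Finset.prod_insert hvF]
    simp only [Finset.prod_insert hvF] at *
    rw [step, ih (fun v hv w hw hvw => hdis v (Finset.mem_insert_of_mem hv) w
      (Finset.mem_insert_of_mem hw) hvw)
      (fun v hv => hg v (Finset.mem_insert_of_mem hv))]

/-- Measure of a cylinder event `∀ i ∈ E, f i = true` under a pi measure. -/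
lemma pi_measure_cylinder {ι : Type*} [Fintype ι] (ν : ι → Measure Bool)
    [∀ i, IsProbabilityMeasure (ν i)] (E : Finset ι) :
    Measure.pi ν {f | ∀ i ∈ E, f i = true} = ∏ i ∈ E, ν i {true} := by
  classical
  have hset : {f : ι → Bool | ∀ i ∈ E, f i = true} =
      Set.pi Set.univ (fun i => if i ∈ E then {true} else Set.univ) := by
    ext f
    simp only [Set.mem_setOf_eq, Set.mem_pi, Set.mem_univ, forall_true_left]
    constructor
    · intro hf i
      by_cases hi : i ∈ E
      · simp [hi, hf i hi]
      · simp [hi]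
    · intro hf i hi
      have := hf i
      simpa [hi] using this
  rw [hset, Measure.pi_pi]
  have : ∀ i : ι, ν i (if i ∈ E then ({true} : Set Bool) else Set.univ)
      = if i ∈ E then ν i {true} else 1 := by
    intro i
    by_cases hi : i ∈ E
    · simp [hi]
    · rw [if_neg hi, if_neg hi, measure_univ]
  simp only [this]
  rw [Finset.prod_ite_mem, Finset.univ_inter]

/-- The Bernoulli factor measure. -/
noncomputable def bern (p : ℝ) : Measure Bool :=
  (ENNReal.ofReal p) • Measure.dirac true + (ENNReal.ofReal (1 - p)) • Measure.dirac false

lemma bern_true (p : ℝ) (hp1 : p ≤ 1) : bern p {true} = ENNReal.ofReal p := by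
  simp [bern, Measure.dirac_apply', MeasurableSet.singleton, Set.indicator]

lemma bern_isProbability {p : ℝ} (hp0 : 0 ≤ p) (hp1 : p ≤ 1) :
    IsProbabilityMeasure (bern p) := by
  constructor
  have : bern p Set.univ = ENNReal.ofReal p + ENNReal.ofReal (1 - p) := by
    simp [bern]
  rw [this, ← ENNReal.ofReal_add hp0 (by linarith), add_sub_cancel, ENNReal.ofReal_one]

/-- Integral of a two-valued function. -/
lemma lintegral_if_prob {Ω : Type*} [MeasurableSpace Ω] (μ : Measure Ω)
    [IsProbabilityMeasure μ] (A : Set Ω) [DecidablePred (· ∈ A)]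
    (hA : MeasurableSet A) (r : ℝ≥0∞) :
    ∫⁻ ω, (if ω ∈ A then r else 1) ∂μ = r * μ A + (1 - μ A) := by
  have : (fun ω => if ω ∈ A then r else 1) =
      fun ω => A.indicator (fun _ => r) ω + Aᶜ.indicator (fun _ => (1:ℝ≥0∞)) ω := by
    ext ω
    by_cases hω : ω ∈ A <;> simp [hω, Set.indicator]
  rw [this, lintegral_add_left (measurable_const.indicator hA),
    lintegral_indicator hA, lintegral_indicator hA.compl]
  simp [measure_compl hA (measure_ne_top μ A), mul_comm]

/-- Chernoff-type bound for the lower tail of the number of common neighbors of a `k`-set. -/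
lemma perS_bound (n k : ℕ) (hk : 1 ≤ k) (hkn : k ≤ n) (p : ℝ) (hp0 : 0 ≤ p) (hp1 : p ≤ 1)
    (S : Finset (Fin n)) (hS : S.card = k) (T : ℕ) :
    gnp n p {f | (((Finset.univ : Finset (Fin n)) \ S).filter
        (fun v => ∀ u ∈ S, f (s(v, u)) = true)).card ≤ T}
      ≤ ENNReal.ofReal (Real.exp ((T : ℝ)
          - (1 - Real.exp (-1)) * p ^ k * ((n : ℝ) - (k : ℝ)))) := by
  classical
  haveI hbp : IsProbabilityMeasure (bern p) := bern_isProbability hp0 hp1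
  have hgnp : gnp n p = Measure.pi (fun _ : Sym2 (Fin n) => bern p) := rfl
  haveI : IsProbabilityMeasure (gnp n p) := by
    rw [hgnp]; infer_instance
  set μ := gnp n p with hμ
  set Y : (Sym2 (Fin n) → Bool) → ℕ := fun f =>
    (((Finset.univ : Finset (Fin n)) \ S).filter
      (fun v => ∀ u ∈ S, f (s(v, u)) = true)).card with hY
  set r : ℝ≥0∞ := ENNReal.ofReal (Real.exp (-1)) with hr
  have hr1 : r ≤ 1 := by
    rw [hr, ← ENNReal.ofReal_one]
    exact ENNReal.ofReal_le_ofReal (Real.exp_le_one_iff.2 (by norm_num))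
  have hr0 : r ≠ 0 := by
    rw [hr]
    simp [ENNReal.ofReal_eq_zero, not_le, Real.exp_pos]
  have hrt : r ^ T ≠ ⊤ := ENNReal.pow_ne_top ENNReal.ofReal_ne_top
  have hrT0 : r ^ T ≠ 0 := pow_ne_zero _ hr0
  set A : Set (Sym2 (Fin n) → Bool) := {f | Y f ≤ T} with hA
  have hAm : MeasurableSet A := (Set.to_countable A).measurableSet
  -- Markov / Chernoff step
  have h1 : r ^ T * μ A ≤ ∫⁻ f, r ^ (Y f) ∂μ := by
    have : r ^ T * μ A = ∫⁻ f, A.indicator (fun _ => r ^ T) f ∂μ := by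
      rw [lintegral_indicator hAm, setLIntegral_const]
    rw [this]
    refine lintegral_mono fun f => ?_
    by_cases hf : f ∈ A
    · simpa [hf] using pow_le_pow_right_of_le_one' hr1 hf
    · simp [hf]
  -- product structure
  set q : ℝ := p ^ k with hq
  have hq0 : 0 ≤ q := pow_nonneg hp0 k
  have hq1 : q ≤ 1 := pow_le_one₀ hp0 hp1
  set g : Fin n → (Sym2 (Fin n) → Bool) → ℝ≥0∞ := fun v f =>
    if (∀ u ∈ S, f (s(v, u)) = true) then r else 1 with hg
  have h2 : ∀ f, r ^ (Y f) = ∏ v ∈ Finset.univ \ S, g v f := by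
    intro f
    rw [hY]
    rw [← Finset.prod_const (b := r), Finset.prod_filter]
  -- factorization
  set E : Fin n → Finset (Sym2 (Fin n)) := fun v => S.image (fun u => s(v, u)) with hE
  have hfact : ∫⁻ f, ∏ v ∈ Finset.univ \ S, g v f ∂μ
      = ∏ v ∈ Finset.univ \ S, ∫⁻ f, g v f ∂μ := by
    rw [hgnp]
    refine lintegral_pi_prod_blocks (fun _ : Sym2 (Fin n) => bern p) (Finset.univ \ S) E g ?_ ?_
    · intro v hv w hw hvw
      rw [Finset.disjoint_left]
      intro i hiv hiw
      rw [hE] at hiv hiw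
      simp only [Finset.mem_image] at hiv hiw
      obtain ⟨u, hu, rfl⟩ := hiv
      obtain ⟨u', hu', he⟩ := hiw
      rw [Sym2.eq_iff] at he
      rcases he with ⟨h1, h2⟩ | ⟨h1, h2⟩
      · exact hvw (h1.symm ▸ rfl)
      · rw [Finset.mem_sdiff] at hv
        exact hv.2 (h2 ▸ hu')
    · intro v hv f f' hff
      rw [hg]
      simp only
      refine if_congr ?_ rfl rfl
      constructor
      · intro h u hu
        rw [← hff _ (by rw [hE]; exact Finset.mem_image_of_mem _ hu)]
        exact h u hu
      · intro h u hu
        rw [hff _ (by rw [hE]; exact Finset.mem_image_of_mem _ hu)]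
        exact h u hu
  -- single-factor computation
  have hcyl : ∀ v ∈ Finset.univ \ S,
      μ {f : Sym2 (Fin n) → Bool | ∀ u ∈ S, f (s(v, u)) = true}
        = ENNReal.ofReal q := by
    intro v hv
    rw [Finset.mem_sdiff] at hv
    have hset : {f : Sym2 (Fin n) → Bool | ∀ u ∈ S, f (s(v, u)) = true}
        = {f | ∀ i ∈ E v, f i = true} := by
      ext f
      simp only [Set.mem_setOf_eq, hE, Finset.forall_mem_image]
    rw [hset, hgnp, pi_measure_cylinder]
    rw [Finset.prod_const, bern_true p hp1]
    have hcard : (E v).card = k := by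
      rw [hE]
      simp only
      rw [Finset.card_image_of_injOn, hS]
      intro u hu u' hu' he
      rw [Sym2.eq_iff] at he
      rcases he with ⟨_, h2⟩ | ⟨h1, _⟩
      · exact h2
      · exact absurd (h1 ▸ hu') hv.2
    rw [hcard, hq, ENNReal.ofReal_pow hp0]
  have hfac : ∀ v ∈ Finset.univ \ S,
      ∫⁻ f, g v f ∂μ ≤ ENNReal.ofReal (Real.exp (-(1 - Real.exp (-1)) * q)) := by
    intro v hv
    set Av : Set (Sym2 (Fin n) → Bool) := {f | ∀ u ∈ S, f (s(v, u)) = true} with hAv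
    have : ∫⁻ f, g v f ∂μ = r * μ Av + (1 - μ Av) := by
      rw [← lintegral_if_prob μ Av (Set.to_countable Av).measurableSet r]
      exact lintegral_congr fun f => by rw [hg]; rfl
    rw [this, hcyl v hv]
    have e1 : r * ENNReal.ofReal q = ENNReal.ofReal (Real.exp (-1) * q) := by
      rw [hr, ENNReal.ofReal_mul (Real.exp_nonneg _)]
    have e2 : (1 : ℝ≥0∞) - ENNReal.ofReal q = ENNReal.ofReal (1 - q) := by
      rw [← ENNReal.ofReal_one, ← ENNReal.ofReal_sub _ hq0]
    rw [e1, e2, ← ENNReal.ofReal_add (by positivity) (by linarith)]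
    refine ENNReal.ofReal_le_ofReal ?_
    have := Real.add_one_le_exp (-(1 - Real.exp (-1)) * q)
    nlinarith [Real.exp_pos (-(1:ℝ))]
  -- combine
  have hcard' : (Finset.univ \ S).card = n - k := by
    rw [Finset.card_sdiff_of_subset (Finset.subset_univ S), hS, Finset.card_univ, Fintype.card_fin]
  have h3 : ∫⁻ f, r ^ (Y f) ∂μ
      ≤ ENNReal.ofReal (Real.exp (-(1 - Real.exp (-1)) * q)) ^ (n - k) := by
    calc ∫⁻ f, r ^ (Y f) ∂μ = ∫⁻ f, ∏ v ∈ Finset.univ \ S, g v f ∂μ := by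
          exact lintegral_congr fun f => by rw [h2]
      _ = ∏ v ∈ Finset.univ \ S, ∫⁻ f, g v f ∂μ := hfact
      _ ≤ ∏ v ∈ Finset.univ \ S, ENNReal.ofReal (Real.exp (-(1 - Real.exp (-1)) * q)) :=
          Finset.prod_le_prod' hfac
      _ = _ := by rw [Finset.prod_const, hcard']
  have h4 : μ A ≤ (r ^ T)⁻¹ * ENNReal.ofReal (Real.exp (-(1 - Real.exp (-1)) * q)) ^ (n - k) := by
    have : μ A = (r ^ T)⁻¹ * (r ^ T * μ A) := by
      rw [← mul_assoc, ENNReal.inv_mul_cancel hrT0 hrt, one_mul]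
    rw [this]
    exact mul_le_mul_right (le_trans h1 h3) _
  refine le_trans h4 (le_of_eq ?_)
  have hrTinv : (r ^ T)⁻¹ = ENNReal.ofReal (Real.exp (T : ℝ)) := by
    rw [hr, ← ENNReal.ofReal_pow (Real.exp_nonneg _), ← Real.exp_nat_mul,
      ← ENNReal.ofReal_inv_of_pos (Real.exp_pos _), ← Real.exp_neg]
    congr 1
    ring
  rw [hrTinv, ← ENNReal.ofReal_pow (Real.exp_nonneg _), ← Real.exp_nat_mul,
    ← ENNReal.ofReal_mul (Real.exp_nonneg _), ← Real.exp_add]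
  congr 1
  have : ((n - k : ℕ) : ℝ) = (n : ℝ) - (k : ℝ) := by
    rw [Nat.cast_sub hkn]
  rw [this]
  ring

lemma aux_fact27 : ∀ k : ℕ, 3 ≤ k → 27 * Nat.factorial k ≤ 6 * k ^ k := by
  intro k hk
  induction k with
  | zero => omega
  | succ m ih =>
    rcases Nat.lt_or_ge m 3 with hm | hm
    · interval_cases m
      · omega
      · omega
      · decide
    · have h1 := ih hm
      have h2 : m ^ m ≤ (m + 1) ^ m := Nat.pow_le_pow_left (by omega) m
      calc 27 * Nat.factorial (m + 1) = (m + 1) * (27 * Nat.factorial m) := by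
            rw [Nat.factorial_succ]; ring
        _ ≤ (m + 1) * (6 * m ^ m) := Nat.mul_le_mul_left _ h1
        _ ≤ (m + 1) * (6 * (m + 1) ^ m) := by
            exact Nat.mul_le_mul_left _ (Nat.mul_le_mul_left _ h2)
        _ = 6 * (m + 1) ^ (m + 1) := by ring
  
lemma aux_nine_k : ∀ k : ℕ, 3 ≤ k → 9 * k ≤ 3 ^ k := by
  intro k hk
  induction k with
  | zero => omega
  | succ m ih =>
    rcases Nat.lt_or_ge m 3 with hm | hm
    · interval_cases m
      · omega
      · omega
      · decide
    · have h1 := ih hm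
      have h2 : 9 ≤ 3 ^ m := by
        calc 9 = 3 ^ 2 := by norm_num
          _ ≤ 3 ^ m := Nat.pow_le_pow_right (by norm_num) (by omega)
      calc 9 * (m + 1) = 9 * m + 9 := by ring
        _ ≤ 3 ^ m + 3 ^ m := by omega
        _ ≤ 3 ^ (m + 1) := by rw [pow_succ]; omega


set_option maxHeartbeats 2000000 in
/-- For `k ≥ 3`, `c₁ > 3` and `p = c₁·(log_a n/n)^(1/k)` with `a = k^k/(k^k-k!)`,
the probability that some `k`-set of vertices of `G(n,p)` has fewer than
`2k·log_a n` common neighbors tends to `0` as `n → ∞`. -/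
theorem few_common_neighbors_unlikely (k : ℕ) (hk : 3 ≤ k) (c₁ : ℝ) (hc : 3 < c₁) :
    let a : ℝ := (k : ℝ) ^ k / ((k : ℝ) ^ k - Nat.factorial k)
    let p : ℕ → ℝ := fun n => c₁ * (Real.logb a n / n) ^ ((1 : ℝ) / k)
    Tendsto (fun n : ℕ => gnp n (p n)
        {f | ∃ S : Finset (Fin n), S.card = k ∧
          ({v : Fin n | ∀ u ∈ S, (gOf f).Adj v u}.ncard : ℝ) < 2 * k * Real.logb a n})
      atTop (nhds 0) := by
  intro a p
  classical
  have hpdef : ∀ n : ℕ, p n = c₁ * (Real.logb a n / n) ^ ((1 : ℝ) / k) := fun _ => rfl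
  have hadef0 : a = (k : ℝ) ^ k / ((k : ℝ) ^ k - Nat.factorial k) := rfl
  clear_value a p
  have hk0 : 0 < k := by omega
  have hkR : (3:ℝ) ≤ (k:ℝ) := by exact_mod_cast hk
  have hfactR : 27 * (Nat.factorial k : ℝ) ≤ 6 * (k:ℝ)^k := by exact_mod_cast aux_fact27 k hk
  have hfpos : (0:ℝ) < (Nat.factorial k : ℝ) := by exact_mod_cast k.factorial_pos
  have hdenpos : (0:ℝ) < (k:ℝ)^k - Nat.factorial k := by nlinarith
  have hadef : a = (k:ℝ)^k / ((k:ℝ)^k - Nat.factorial k) := hadef0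
  have ha1 : 1 < a := by
    rw [hadef, lt_div_iff₀ hdenpos]; nlinarith
  have ha97 : a ≤ 9/7 := by
    rw [hadef, div_le_div_iff₀ hdenpos (by norm_num)]; nlinarith
  have hlogapos : 0 < Real.log a := Real.log_pos ha1
  have hloga27 : Real.log a ≤ 2/7 :=
    le_trans (Real.log_le_sub_one_of_pos (by linarith)) (by linarith)
  have hL0 : ∀ n : ℕ, 0 ≤ Real.logb a n := by
    intro n
    rw [Real.logb]
    exact div_nonneg (Real.log_natCast_nonneg n) hlogapos.le
  -- c := 1 - exp(-1) ≥ 1/2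
  have hexp1 : (2:ℝ) ≤ Real.exp 1 := by have := Real.add_one_le_exp 1; linarith
  have hmul1 : Real.exp (-1) * Real.exp 1 = 1 := by rw [← Real.exp_add]; norm_num
  have hexpneg : Real.exp (-1) ≤ 1/2 := by nlinarith [Real.exp_pos (-1)]
  -- p n ≤ 1 eventually
  have hdiv : Tendsto (fun n : ℕ => Real.log n / n) atTop (nhds 0) :=
    (Real.isLittleO_log_id_atTop.tendsto_div_nhds_zero).comp tendsto_natCast_atTop_atTop
  have hLn : Tendsto (fun n : ℕ => Real.logb a n / n) atTop (nhds 0) := by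
    have heq : (fun n : ℕ => Real.logb a n / n)
        = fun n : ℕ => (Real.log n / n) * (Real.log a)⁻¹ := by
      funext n; rw [Real.logb]; ring
    rw [heq]
    simpa using hdiv.mul_const (Real.log a)⁻¹
  have hplt : ∀ᶠ n : ℕ in atTop, p n ≤ 1 := by
    have hev : ∀ᶠ n : ℕ in atTop, Real.logb a n / n < (1/c₁)^k := by
      refine hLn.eventually_lt_const ?_
      positivity
    filter_upwards [hev, eventually_ge_atTop 1] with n hn hn1
    have hLn0 : 0 ≤ Real.logb a n / n := div_nonneg (hL0 n) (Nat.cast_nonneg n)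
    have h1 : (Real.logb a n / n) ^ ((1:ℝ)/k) ≤ ((1/c₁)^k) ^ ((1:ℝ)/k) :=
      Real.rpow_le_rpow hLn0 hn.le (by positivity)
    have heq : ((1/c₁:ℝ)^k) ^ ((1:ℝ)/k) = 1/c₁ := by
      rw [← Real.rpow_natCast (1/c₁) k, ← Real.rpow_mul (by positivity)]
      rw [mul_one_div_cancel (by exact_mod_cast hk0.ne' : (k:ℝ) ≠ 0), Real.rpow_one]
    have : p n ≤ c₁ * (1/c₁) := by
      rw [hpdef n]
      refine mul_le_mul_of_nonneg_left (h1.trans_eq heq) (by linarith)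
    calc p n ≤ c₁ * (1/c₁) := this
      _ = 1 := by field_simp
  -- the dominating real sequence
  set g : ℕ → ℝ := fun n => (n:ℝ)^k * Real.exp ((⌊2*(k:ℝ)*Real.logb a n⌋₊ : ℝ)
      - (1 - Real.exp (-1)) * (p n)^k * ((n:ℝ) - (k:ℝ))) with hgdef
  -- eventual measure bound
  have hbound : ∀ᶠ n : ℕ in atTop, gnp n (p n)
      {f | ∃ S : Finset (Fin n), S.card = k ∧
        ({v : Fin n | ∀ u ∈ S, (gOf f).Adj v u}.ncard : ℝ) < 2 * k * Real.logb a n}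
      ≤ ENNReal.ofReal (g n) := by
    filter_upwards [hplt, eventually_ge_atTop (10*k)] with n hp1n hn10
    have hkn : k ≤ n := by omega
    have hn1 : 1 ≤ n := by omega
    have hp0n : 0 ≤ p n := by
      rw [hpdef n]
      exact mul_nonneg (by linarith) (Real.rpow_nonneg (div_nonneg (hL0 n) (Nat.cast_nonneg n)) _)
    set T : ℕ := ⌊2*(k:ℝ)*Real.logb a n⌋₊ with hT
    have hsub : {f : Sym2 (Fin n) → Bool | ∃ S : Finset (Fin n), S.card = k ∧
          ({v : Fin n | ∀ u ∈ S, (gOf f).Adj v u}.ncard : ℝ) < 2 * k * Real.logb a n}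
        ⊆ ⋃ S ∈ Finset.powersetCard k (Finset.univ : Finset (Fin n)),
            {f | (((Finset.univ : Finset (Fin n)) \ S).filter
              (fun v => ∀ u ∈ S, f (s(v, u)) = true)).card ≤ T} := by
      intro f hf
      obtain ⟨S, hScard, hlt⟩ := hf
      refine Set.mem_biUnion (Finset.mem_powersetCard_univ.2 hScard) ?_
      have hseteq : {v : Fin n | ∀ u ∈ S, (gOf f).Adj v u}
          = ↑(((Finset.univ : Finset (Fin n)) \ S).filter
              (fun v => ∀ u ∈ S, f (s(v, u)) = true)) := by
        ext v
        simp only [Set.mem_setOf_eq, Finset.coe_filter, Finset.mem_sdiff, Finset.mem_univ,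
          true_and, Set.mem_setOf_eq]
        constructor
        · intro h
          have hvS : v ∉ S := by
            intro hv
            exact (gOf f).irrefl (h v hv)
          refine ⟨hvS, fun u hu => ?_⟩
          have h2 := h u hu
          rw [gOf, SimpleGraph.fromEdgeSet_adj] at h2
          exact h2.1
        · rintro ⟨hvS, h⟩ u hu
          rw [gOf, SimpleGraph.fromEdgeSet_adj]
          exact ⟨h u hu, fun he => hvS (he ▸ hu)⟩
      rw [hseteq, Set.ncard_coe_finset] at hlt
      exact Nat.le_floor hlt.le
    calc gnp n (p n) _ ≤ gnp n (p n) (⋃ S ∈ Finset.powersetCard k (Finset.univ : Finset (Fin n)),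
            {f | (((Finset.univ : Finset (Fin n)) \ S).filter
              (fun v => ∀ u ∈ S, f (s(v, u)) = true)).card ≤ T}) := measure_mono hsub
      _ ≤ ∑ S ∈ Finset.powersetCard k (Finset.univ : Finset (Fin n)),
            gnp n (p n) {f | (((Finset.univ : Finset (Fin n)) \ S).filter
              (fun v => ∀ u ∈ S, f (s(v, u)) = true)).card ≤ T} :=
          measure_biUnion_finset_le _ _
      _ ≤ ∑ _S ∈ Finset.powersetCard k (Finset.univ : Finset (Fin n)),
            ENNReal.ofReal (Real.exp ((T : ℝ)
              - (1 - Real.exp (-1)) * (p n) ^ k * ((n : ℝ) - (k : ℝ)))) := by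
          refine Finset.sum_le_sum fun S hS => ?_
          exact perS_bound n k (by omega) hkn (p n) hp0n hp1n S
            (Finset.mem_powersetCard_univ.1 hS) T
      _ ≤ ENNReal.ofReal (g n) := by
          rw [Finset.sum_const, Finset.card_powersetCard, Finset.card_univ, Fintype.card_fin,
            nsmul_eq_mul]
          have h1 : ((n.choose k : ℕ) : ℝ≥0∞) ≤ ENNReal.ofReal ((n:ℝ)^k) := by
            have h2 : ((n.choose k : ℕ) : ℝ≥0∞) ≤ ((n ^ k : ℕ) : ℝ≥0∞) := by
              exact_mod_cast Nat.choose_le_pow n k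
            refine h2.trans (le_of_eq ?_)
            rw [← ENNReal.ofReal_natCast (n ^ k)]
            congr 1
            push_cast
            ring
          calc (n.choose k : ℝ≥0∞) * ENNReal.ofReal _
              ≤ ENNReal.ofReal ((n:ℝ)^k) * ENNReal.ofReal _ := mul_le_mul_left h1 _
            _ = ENNReal.ofReal (g n) := by
              rw [← ENNReal.ofReal_mul (by positivity), hgdef]
  -- the dominating sequence tends to 0
  have hgto : Tendsto g atTop (nhds 0) := by
    have h3kR : (9:ℝ) * k ≤ 3^k := by exact_mod_cast aux_nine_k k hk
    have hc1k : (3:ℝ)^k ≤ c₁^k := pow_le_pow_left₀ (by norm_num) hc.le k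
    refine squeeze_zero' ?_ ?_ tendsto_one_div_atTop_nhds_zero_nat
    · filter_upwards with n
      rw [hgdef]
      positivity
    · filter_upwards [eventually_ge_atTop (10*k)] with n hn10
      have hn1 : 1 ≤ n := by omega
      have hnR : (1:ℝ) ≤ (n:ℝ) := by exact_mod_cast hn1
      have hnpos : (0:ℝ) < (n:ℝ) := by linarith
      set Lr : ℝ := Real.logb a n with hLr
      have hLr0 : 0 ≤ Lr := hL0 n
      have hlogn0 : 0 ≤ Real.log n := Real.log_nonneg hnR
      have hLrdef : Lr = Real.log n / Real.log a := by rw [hLr, Real.logb]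
      -- q identity
      have hq : (p n)^k = c₁^k * (Lr / n) := by
        rw [hpdef n, mul_pow, hLr]
        congr 1
        rw [← Real.rpow_natCast ((Real.logb a n / n) ^ ((1:ℝ)/k)) k,
          ← Real.rpow_mul (div_nonneg (hL0 n) (Nat.cast_nonneg n)),
          one_div_mul_cancel (by exact_mod_cast hk0.ne' : (k:ℝ) ≠ 0), Real.rpow_one]
      have hfloor : ((⌊2*(k:ℝ)*Lr⌋₊ : ℕ):ℝ) ≤ 2*(k:ℝ)*Lr := Nat.floor_le (by positivity)
      -- fraction bound
      have h10k : (10:ℝ)*(k:ℝ) ≤ (n:ℝ) := by exact_mod_cast hn10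
      have hfrac : (9/10:ℝ) * (n:ℝ) ≤ (n:ℝ) - (k:ℝ) := by linarith
      have hnk0 : (0:ℝ) ≤ (n:ℝ) - (k:ℝ) := by linarith
      have hc1kpos : (0:ℝ) < c₁^k := by positivity
      -- lower bound for the mean term
      have hmean : (9/20) * c₁^k * Lr ≤ (1 - Real.exp (-1)) * (p n)^k * ((n:ℝ) - (k:ℝ)) := by
        have e1 : (p n)^k * ((n:ℝ) - (k:ℝ)) = c₁^k * Lr * (((n:ℝ) - (k:ℝ))/n) := by
          rw [hq]; field_simp
        have e2 : (9/10:ℝ) ≤ (((n:ℝ) - (k:ℝ))/n) := by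
          rw [le_div_iff₀ hnpos]; linarith
        have e3 : (9/10) * (c₁^k * Lr) ≤ (p n)^k * ((n:ℝ) - (k:ℝ)) := by
          rw [e1]
          have := mul_le_mul_of_nonneg_left e2 (by positivity : (0:ℝ) ≤ c₁^k * Lr)
          linarith
        have e4 : (1/2:ℝ) ≤ 1 - Real.exp (-1) := by linarith
        have e5 : (0:ℝ) ≤ (p n)^k * ((n:ℝ) - (k:ℝ)) := by
          refine le_trans ?_ e3
          positivity
        have e6 : (1/2) * ((p n)^k * ((n:ℝ) - (k:ℝ)))
            ≤ (1 - Real.exp (-1)) * ((p n)^k * ((n:ℝ) - (k:ℝ))) :=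
          mul_le_mul_of_nonneg_right e4 e5
        linarith
      -- exponent inequality
      have hexpineq : (k:ℝ) * Real.log n + (⌊2*(k:ℝ)*Lr⌋₊ : ℝ)
          - (1 - Real.exp (-1)) * (p n)^k * ((n:ℝ) - (k:ℝ)) ≤ -Real.log n := by
        have hbeta : ((k:ℝ)+1) * Real.log a ≤ (9/20) * c₁^k - 2*(k:ℝ) := by
          have A : ((k:ℝ)+1) * Real.log a ≤ ((k:ℝ)+1) * (2/7) :=
            mul_le_mul_of_nonneg_left hloga27 (by linarith)
          have B : (9:ℝ)*(k:ℝ) ≤ c₁^k := le_trans h3kR hc1k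
          linarith
        have hLrln : Lr * Real.log a = Real.log n := by
          rw [hLrdef]; field_simp
        have : ((k:ℝ)+1) * Real.log n ≤ ((9/20) * c₁^k - 2*(k:ℝ)) * Lr := by
          calc ((k:ℝ)+1) * Real.log n = (((k:ℝ)+1) * Real.log a) * Lr := by
                rw [← hLrln]; ring
            _ ≤ ((9/20) * c₁^k - 2*(k:ℝ)) * Lr := mul_le_mul_of_nonneg_right hbeta hLr0
        nlinarith [hmean, hfloor, this]
      -- convert to the claimed bound
      have hnk : (n:ℝ)^k = Real.exp ((k:ℝ) * Real.log n) := by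
        rw [← Real.log_pow, Real.exp_log (by positivity)]
      have hfin : g n ≤ 1/(n:ℝ) := by
        rw [hgdef]
        simp only
        rw [hnk, ← Real.exp_add]
        have : 1/(n:ℝ) = Real.exp (-Real.log n) := by
          rw [Real.exp_neg, Real.exp_log hnpos, one_div]
        rw [this]
        exact Real.exp_le_exp.2 (by linarith [hexpineq])
      exact hfin
  have hup : Tendsto (fun n : ℕ => ENNReal.ofReal (g n)) atTop (nhds 0) := by
    have := ENNReal.tendsto_ofReal hgto
    simpa using this
  exact tendsto_of_tendsto_of_tendsto_of_le_of_le' tendsto_const_nhds hup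
    (Filter.Eventually.of_forall fun n => zero_le) hbound
end
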